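/- If a two-qubit Bell-diagonal state ρ = Σ p_i |Φ_i⟩⟨Φ_i| has a 2-symmetric extension, then p_i ≤ 3/4 for every i ∈ {1,2,3,4}. -/

import Mathlib

open Matrix Kronecker BigOperators
open scoped ComplexOrder

/-- Partial trace over the second (B) tensor factor. -/
noncomputable def ptraceB {A B : Type*} [Fintype B]
    (M : Matrix (A × B) (A × B) ℂ) : Matrix A A ℂ :=
  Matrix.of fun a a' => ∑ b, M (a, b) (a', b)

/-- The marginal of a state on `A × (B₁ × ⋯ × B_k)` on the subsystems `A, B_i`. -/
noncomputable def margAB {A B : Type*} {k : ℕ} [Fintype B] [DecidableEq B] (i : Fin k)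
    (ρ : Matrix (A × (Fin k → B)) (A × (Fin k → B)) ℂ) : Matrix (A × B) (A × B) ℂ :=
  Matrix.of fun p q => ∑ f : Fin k → B,
    if f i = p.2 then ρ (p.1, f) (q.1, Function.update f i q.2) else 0

/-- A density matrix: positive semidefinite with unit trace. -/
def IsDensity {n : Type*} [Fintype n] (ρ : Matrix n n ℂ) : Prop :=
  ρ.PosSemidef ∧ ρ.trace = 1

/-- A bipartite state is separable if it is a finite convex combination of
product density matrices. -/
def IsSep {A B : Type*} [Fintype A] [Fintype B]
    (ρ : Matrix (A × B) (A × B) ℂ) : Prop :=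
  ∃ (n : ℕ) (p : Fin n → ℝ) (σA : Fin n → Matrix A A ℂ) (σB : Fin n → Matrix B B ℂ),
    (∀ i, 0 ≤ p i) ∧ (∑ i, p i = 1) ∧ (∀ i, IsDensity (σA i)) ∧ (∀ i, IsDensity (σB i)) ∧
    ρ = ∑ i, (p i : ℂ) • (σA i ⊗ₖ σB i)

/-- `ρAB` has a `k`-symmetric extension. -/
def HasSymExt {A B : Type*} [Fintype A] [Fintype B] [DecidableEq B] (k : ℕ)
    (ρAB : Matrix (A × B) (A × B) ℂ) : Prop :=
  ∃ ρ : Matrix (A × (Fin k → B)) (A × (Fin k → B)) ℂ,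
    IsDensity ρ ∧ ∀ i : Fin k, margAB i ρ = ρAB

/-- The permutation operator `W_π` on `(ℂ^B)^{⊗ k}`,
`W_π |i_1 … i_k⟩ = |i_{π⁻¹(1)} … i_{π⁻¹(k)}⟩`. -/
noncomputable def Wperm {k : ℕ} {B : Type*} [DecidableEq B] (π : Equiv.Perm (Fin k)) :
    Matrix (Fin k → B) (Fin k → B) ℂ :=
  Matrix.of fun f g => if f = g ∘ ⇑π⁻¹ then 1 else 0

/-- `(1/k!) ∑_π W_π`. -/
noncomputable def symProj {k : ℕ} {B : Type*} [DecidableEq B] :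
    Matrix (Fin k → B) (Fin k → B) ℂ :=
  ((k.factorial : ℂ))⁻¹ • ∑ π : Equiv.Perm (Fin k), Wperm π

/-- `ρAB` has a `k`-bosonic extension: a `k`-symmetric extension whose support on the
`B` systems lies in the symmetric subspace. -/
def HasBosonicExt {A B : Type*} [Fintype A] [DecidableEq A] [Fintype B] [DecidableEq B] (k : ℕ)
    (ρAB : Matrix (A × B) (A × B) ℂ) : Prop :=
  ∃ ρ : Matrix (A × (Fin k → B)) (A × (Fin k → B)) ℂ,
    IsDensity ρ ∧ (∀ i : Fin k, margAB i ρ = ρAB) ∧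
    ((1 : Matrix A A ℂ) ⊗ₖ symProj) * ρ * ((1 : Matrix A A ℂ) ⊗ₖ symProj) = ρ

/-- The four Bell states of two qubits. -/
noncomputable def bell : Fin 4 → (Fin 2 × Fin 2 → ℂ) :=
  ![fun p => if p.1 = p.2 then ((Real.sqrt 2 : ℂ))⁻¹ else 0,
    fun p => if p = (0, 0) then ((Real.sqrt 2 : ℂ))⁻¹
             else if p = (1, 1) then -((Real.sqrt 2 : ℂ))⁻¹ else 0,
    fun p => if p.1 ≠ p.2 then ((Real.sqrt 2 : ℂ))⁻¹ else 0,
    fun p => if p = (0, 1) then ((Real.sqrt 2 : ℂ))⁻¹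
             else if p = (1, 0) then -((Real.sqrt 2 : ℂ))⁻¹ else 0]

/-- The Bell-diagonal state `∑ p_i |Φ_i⟩⟨Φ_i|`. -/
noncomputable def bellDiag (p : Fin 4 → ℝ) : Matrix (Fin 2 × Fin 2) (Fin 2 × Fin 2) ℂ :=
  ∑ i, (p i : ℂ) • Matrix.vecMulVec (bell i) (star (bell i))

/-!
Let `P` and `Q` be the Bell projector `|Φᵢ⟩⟨Φᵢ|` acting on `A B₁` and on `A B₂` respectively.
Since `Φᵢ` is maximally entangled, `P Q P = P / 4` and `Q P Q = Q / 4`: the two projections sit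
at an angle of 60°, so `P + Q ≤ 3/2`. Pairing this operator inequality with a symmetric extension
`ρ`, whose `A B₁` and `A B₂` marginals both equal the Bell-diagonal state, gives
`pᵢ + pᵢ = tr ((P + Q) ρ) ≤ 3/2`.
-/

open Function

namespace Matrix

variable {n : Type*} [Fintype n]

open scoped MatrixOrder in
lemma PosSemidef.trace_mul_nonneg {A B : Matrix n n ℂ} (hA : A.PosSemidef) (hB : B.PosSemidef) :
    0 ≤ (A * B).trace := by
  classical
  obtain ⟨C, rfl⟩ := CStarAlgebra.nonneg_iff_eq_star_mul_self.mp hB.nonneg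
  rw [← Matrix.mul_assoc, trace_mul_cycle]
  exact (hA.mul_mul_conjTranspose_same C).trace_nonneg

open scoped MatrixOrder in
lemma _root_.IsStarProjection.posSemidef {P : Matrix n n ℂ} (hP : IsStarProjection P) :
    P.PosSemidef :=
  nonneg_iff_posSemidef.mp hP.nonneg

variable [DecidableEq n]

lemma sub_sq_of_isStarProjection {P Q : Matrix n n ℂ} (hP : IsStarProjection P)
    (hQ : IsStarProjection Q) : (P - Q) ^ 2 = P + Q - P * Q - Q * P := by
  rw [sq, sub_mul, mul_sub, mul_sub, hP.isIdempotentElem.eq, hQ.isIdempotentElem.eq]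
  abel

/- `(P - Q)²` acts as `3/4` on the ranges of `P` and `Q` (and as `0` on the joint kernel), so it
is `3/4` times the projection onto the span of those ranges. -/
lemma isStarProjection_smul_sub_sq {P Q : Matrix n n ℂ} (hP : IsStarProjection P)
    (hQ : IsStarProjection Q) (hPQP : P * Q * P = (4⁻¹ : ℂ) • P)
    (hQPQ : Q * P * Q = (4⁻¹ : ℂ) • Q) : IsStarProjection ((4 / 3 : ℂ) • (P - Q) ^ 2) := by
  have hPP : P * P = P := hP.isIdempotentElem
  have hQQ : Q * Q = Q := hQ.isIdempotentElem
  set D := (P - Q) ^ 2 with hD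
  rw [sub_sq_of_isStarProjection hP hQ] at hD
  rw [Matrix.mul_assoc] at hPQP hQPQ
  have hDP : D * P = (3 / 4 : ℂ) • P := by
    simp only [hD, sub_mul, add_mul, hPP, hPQP, Matrix.mul_assoc]
    module
  have hDQ : D * Q = (3 / 4 : ℂ) • Q := by
    simp only [hD, sub_mul, add_mul, hQQ, hQPQ, Matrix.mul_assoc]
    module
  have hDD : D * D = (3 / 4 : ℂ) • D := by
    have hexp : D * D = D * P + D * Q - D * P * Q - D * Q * P := by rw [hD]; noncomm_ring
    rw [hexp, hDP, hDQ, smul_mul_assoc, smul_mul_assoc, hD]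
    module
  refine ⟨?_, ?_⟩
  · rw [IsIdempotentElem, smul_mul_smul_comm, hDD, smul_smul]
    norm_num
  · have hsa : IsSelfAdjoint ((P - Q) ^ 2) := (hP.isSelfAdjoint.sub hQ.isSelfAdjoint).pow 2
    exact .smul (by simp [IsSelfAdjoint]) hsa

lemma isStarProjection_two_smul_sub_sq_sub_sub {P Q : Matrix n n ℂ} (hP : IsStarProjection P)
    (hQ : IsStarProjection Q) (hPQP : P * Q * P = (4⁻¹ : ℂ) • P)
    (hQPQ : Q * P * Q = (4⁻¹ : ℂ) • Q) : IsStarProjection ((2 : ℂ) • (P - Q) ^ 2 - P - Q) := by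
  have hPP : P * P = P := hP.isIdempotentElem
  have hQQ : Q * Q = Q := hQ.isIdempotentElem
  have hPP' (X : Matrix n n ℂ) : P * (P * X) = P * X := by rw [← Matrix.mul_assoc, hPP]
  have hQQ' (X : Matrix n n ℂ) : Q * (Q * X) = Q * X := by rw [← Matrix.mul_assoc, hQQ]
  have hsa : IsSelfAdjoint ((P - Q) ^ 2) := (hP.isSelfAdjoint.sub hQ.isSelfAdjoint).pow 2
  refine ⟨?_, ((IsSelfAdjoint.smul (by simp [IsSelfAdjoint]) hsa).sub hP.isSelfAdjoint).sub
    hQ.isSelfAdjoint⟩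
  have hR : (2 : ℂ) • (P - Q) ^ 2 - P - Q = P + Q - (2 : ℂ) • (P * Q + Q * P) := by
    rw [sub_sq_of_isStarProjection hP hQ]
    module
  rw [Matrix.mul_assoc] at hPQP hQPQ
  rw [IsIdempotentElem, hR]
  simp only [mul_add, mul_sub, add_mul, sub_mul, mul_smul_comm, smul_mul_assoc, Matrix.mul_assoc,
    hPP, hQQ, hPP', hQQ', hPQP, hQPQ, smul_add]
  module

lemma posSemidef_three_halves_smul_one_sub_sub {P Q : Matrix n n ℂ}
    (hP : IsStarProjection P) (hQ : IsStarProjection Q)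
    (hPQP : P * Q * P = (4⁻¹ : ℂ) • P) (hQPQ : Q * P * Q = (4⁻¹ : ℂ) • Q) :
    ((3 / 2 : ℂ) • 1 - P - Q).PosSemidef := by
  have hsplit : (3 / 2 : ℂ) • 1 - P - Q =
      (3 / 2 : ℂ) • (1 - (4 / 3 : ℂ) • (P - Q) ^ 2) + ((2 : ℂ) • (P - Q) ^ 2 - P - Q) := by
    module
  rw [hsplit]
  exact (((isStarProjection_smul_sub_sq hP hQ hPQP hQPQ).one_sub.posSemidef).smul
    (by norm_num [Complex.nonneg_iff])).add
    (isStarProjection_two_smul_sub_sq_sub_sub hP hQ hPQP hQPQ).posSemidef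

end Matrix

lemma Fintype.sum_ite_eq_update {ι β M : Type*} [DecidableEq ι] [Fintype ι] [DecidableEq β]
    [Fintype β] [AddCommMonoid M] (g : ι → β) (i : ι) (F : (ι → β) → M) :
    ∑ f, (if f = update g i (f i) then F f else 0) = ∑ b, F (update g i b) := by
  have hcollapse (f : ι → β) :
      ∑ b, (if f = update g i b then F f else 0) = if f = update g i (f i) then F f else 0 := by
    refine Finset.sum_eq_single (f i) (fun b _ hb => if_neg ?_) (by simp)
    rintro rfl
    simp at hb
  simp_rw [← hcollapse]
  rw [Finset.sum_comm]
  simp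

lemma Fintype.sum_fin_two_fun {β M : Type*} [Fintype β] [AddCommMonoid M]
    (F : (Fin 2 → β) → M) : ∑ f, F f = ∑ b, ∑ c, F ![b, c] := by
  rw [← (piFinTwoEquiv fun _ => β).symm.sum_comp, Fintype.sum_prod_type]
  rfl

/-- The operator `P` on the subsystems `A, Bᵢ` of `A ⊗ B₁ ⊗ ⋯ ⊗ Bₖ`, tensored with the identity on
the other `Bⱼ`. -/
noncomputable def embAB {A B : Type*} {k : ℕ} [DecidableEq B] (i : Fin k)
    (P : Matrix (A × B) (A × B) ℂ) : Matrix (A × (Fin k → B)) (A × (Fin k → B)) ℂ :=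
  Matrix.of fun x y => if x.2 = update y.2 i (x.2 i) then P (x.1, x.2 i) (y.1, y.2 i) else 0

section embAB

variable {A B : Type*} {k : ℕ} [DecidableEq B]

lemma conjTranspose_embAB (i : Fin k) (P : Matrix (A × B) (A × B) ℂ) :
    (embAB i P)ᴴ = embAB i Pᴴ := by
  ext x y
  have hsymm : y.2 = update x.2 i (y.2 i) ↔ x.2 = update y.2 i (x.2 i) := by
    simp only [eq_update_iff, true_and]
    exact forall₂_congr fun _ _ => eq_comm
  simp [embAB, Matrix.conjTranspose_apply, apply_ite star, hsymm]

variable [Fintype A] [Fintype B]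

lemma embAB_mul (i : Fin k) (P Q : Matrix (A × B) (A × B) ℂ) :
    embAB i (P * Q) = embAB i P * embAB i Q := by
  ext x y
  simp only [embAB, Matrix.mul_apply, Matrix.of_apply, Fintype.sum_prod_type]
  have h := Fintype.sum_ite_eq_update y.2 i fun f => ∑ a, (if x.2 = update f i (x.2 i) then
    P (x.1, x.2 i) (a, f i) else 0) * Q (a, f i) (y.1, y.2 i)
  simp only [update_self, update_idem] at h
  convert h.symm using 1
  · split_ifs
    exacts [Finset.sum_comm, by simp]
  · rw [Finset.sum_comm]
    exact Finset.sum_congr rfl fun f _ => by split_ifs <;> simp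

lemma IsStarProjection.embAB {P : Matrix (A × B) (A × B) ℂ} (hP : IsStarProjection P)
    (i : Fin k) : IsStarProjection (embAB i P) where
  isIdempotentElem := by rw [IsIdempotentElem, ← embAB_mul, hP.isIdempotentElem.eq]
  isSelfAdjoint := by
    rw [IsSelfAdjoint, Matrix.star_eq_conjTranspose, conjTranspose_embAB,
      ← Matrix.star_eq_conjTranspose, hP.isSelfAdjoint.star_eq]

lemma trace_embAB_mul (i : Fin k) (P : Matrix (A × B) (A × B) ℂ)
    (ρ : Matrix (A × (Fin k → B)) (A × (Fin k → B)) ℂ) :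
    (embAB i P * ρ).trace = (P * margAB i ρ).trace := by
  rw [Matrix.trace_mul_comm, Matrix.trace_mul_comm P]
  simp only [Matrix.trace, Matrix.diag, Matrix.mul_apply, embAB, margAB, Matrix.of_apply,
    Fintype.sum_prod_type, mul_ite, mul_zero, Finset.sum_mul, ite_mul, zero_mul,
    Fintype.sum_ite_eq_update, update_self]
  refine Finset.sum_congr rfl fun a' _ => ?_
  conv_rhs => enter [2, b', 2, a]; rw [Finset.sum_comm]
  conv_rhs => enter [2, b']; rw [Finset.sum_comm]
  conv_rhs => rw [Finset.sum_comm]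
  simp only [Finset.sum_ite_irrel, Finset.sum_const_zero, Finset.sum_ite_eq, Finset.mem_univ,
    if_true]

/- `r • 1` is the reduced state of `|v⟩⟨v|` on `B` (transposed); for a maximally entangled unit
vector `r = 1 / dim B`. -/
lemma embAB_mul_embAB_mul_embAB_vecMulVec {i j : Fin 2} (hij : i ≠ j) (v : A × B → ℂ) (r : ℂ)
    (hv : ∀ c c', ∑ a, star (v (a, c')) * v (a, c) = if c = c' then r else 0) :
    embAB i (vecMulVec v (star v)) * embAB j (vecMulVec v (star v)) *
      embAB i (vecMulVec v (star v)) = r ^ 2 • embAB i (vecMulVec v (star v)) := by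
  have hfactor (a a' : A) (b c c' b' : B) : ∑ a₂, ∑ b₁, (∑ a₁, v (a, b) * star (v (a₁, b₁)) *
      (v (a₁, c) * star (v (a₂, c')))) * (v (a₂, b₁) * star (v (a', b'))) =
      v (a, b) * star (v (a', b')) * ∑ b₁, (∑ a₁, star (v (a₁, b₁)) * v (a₁, c)) *
        ∑ a₂, star (v (a₂, c')) * v (a₂, b₁) := by
    simp only [Finset.mul_sum, Finset.sum_mul]
    rw [Finset.sum_comm]
    exact Finset.sum_congr rfl fun _ _ => Finset.sum_congr rfl fun _ _ =>
      Finset.sum_congr rfl fun _ _ => by ring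
  simp only [RCLike.star_def] at hfactor hv
  ext ⟨a, f⟩ ⟨a', g⟩
  fin_cases i <;> fin_cases j <;> simp only [ne_eq, not_true_eq_false] at hij <;>
    simp [Matrix.mul_apply, Fintype.sum_prod_type, Fintype.sum_fin_two_fun, embAB, funext_iff,
      Fin.forall_fin_two, vecMulVec_apply] <;>
    rw [hfactor, Finset.sum_congr rfl fun b₁ _ => by rw [hv, hv]] <;>
    split_ifs with h <;> simp [h, sq, mul_comm]

end embAB

noncomputable def bellProj (j : Fin 4) : Matrix (Fin 2 × Fin 2) (Fin 2 × Fin 2) ℂ :=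
  vecMulVec (bell j) (star (bell j))

lemma inv_sqrt_two_mul_self : ((Real.sqrt 2 : ℂ))⁻¹ * ((Real.sqrt 2 : ℂ))⁻¹ = 2⁻¹ := by
  rw [← mul_inv, ← Complex.ofReal_mul, Real.mul_self_sqrt zero_le_two]
  norm_num

lemma star_bell_dotProduct_bell (i j : Fin 4) :
    star (bell i) ⬝ᵥ bell j = if i = j then 1 else 0 := by
  fin_cases i <;> fin_cases j <;>
    simp [bell, dotProduct, Fintype.sum_prod_type, Fin.sum_univ_two, Prod.ext_iff,
      inv_sqrt_two_mul_self] <;>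
    norm_num

lemma sum_star_bell_mul_bell (j : Fin 4) (c c' : Fin 2) :
    ∑ a, star (bell j (a, c')) * bell j (a, c) = if c = c' then 2⁻¹ else 0 := by
  fin_cases j <;> fin_cases c <;> fin_cases c' <;>
    simp [bell, Fin.sum_univ_two, inv_sqrt_two_mul_self]

lemma isStarProjection_bellProj (j : Fin 4) : IsStarProjection (bellProj j) where
  isIdempotentElem := by
    rw [IsIdempotentElem, bellProj, vecMulVec_mul_vecMulVec, star_bell_dotProduct_bell, if_pos rfl,
      one_smul]
  isSelfAdjoint := (posSemidef_vecMulVec_self_star (bell j)).isHermitian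

lemma trace_bellProj_mul_bellDiag (p : Fin 4 → ℝ) (j : Fin 4) :
    (bellProj j * bellDiag p).trace = p j := by
  simp only [bellProj, bellDiag, Finset.mul_sum, Matrix.mul_smul, vecMulVec_mul_vecMulVec,
    Matrix.trace_sum, Matrix.trace_smul, trace_vecMulVec, star_bell_dotProduct_bell, smul_eq_mul]
  rw [Finset.sum_eq_single j (fun x _ hx => by simp [Ne.symm hx]) (by simp)]
  simp [dotProduct_comm (bell j), star_bell_dotProduct_bell]

theorem stmt19_general (p : Fin 4 → ℝ)
    (h : HasSymExt 2 (bellDiag p)) : ∀ i, p i ≤ 3 / 4 := by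
  intro j
  obtain ⟨ρ, ⟨hρ, htr⟩, hmarg⟩ := h
  set P := embAB (0 : Fin 2) (bellProj j)
  set Q := embAB (1 : Fin 2) (bellProj j)
  have hquarter : ((2 : ℂ)⁻¹) ^ 2 = 4⁻¹ := by norm_num
  have hW : ((3 / 2 : ℂ) • 1 - P - Q).PosSemidef :=
    posSemidef_three_halves_smul_one_sub_sub ((isStarProjection_bellProj j).embAB 0)
      ((isStarProjection_bellProj j).embAB 1)
      (hquarter ▸ embAB_mul_embAB_mul_embAB_vecMulVec (by decide) _ _ (sum_star_bell_mul_bell j))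
      (hquarter ▸ embAB_mul_embAB_mul_embAB_vecMulVec (by decide) _ _ (sum_star_bell_mul_bell j))
  have hP : (P * ρ).trace = p j := by rw [trace_embAB_mul, hmarg 0, trace_bellProj_mul_bellDiag]
  have hQ : (Q * ρ).trace = p j := by rw [trace_embAB_mul, hmarg 1, trace_bellProj_mul_bellDiag]
  have hpair := hW.trace_mul_nonneg hρ
  rw [Matrix.sub_mul, Matrix.sub_mul, Matrix.trace_sub, Matrix.trace_sub, Matrix.smul_mul,
    Matrix.one_mul, Matrix.trace_smul, htr, hP, hQ, smul_eq_mul, mul_one] at hpair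
  have hreal : (0 : ℂ) ≤ ((3 / 2 - 2 * p j : ℝ) : ℂ) := by
    convert hpair using 1
    push_cast
    ring
  linarith [Complex.zero_le_real.mp hreal]

/-- If a two-qubit Bell-diagonal state has a 2-symmetric extension then `p_i ≤ 3/4` for
every `i`. -/
theorem stmt19 (p : Fin 4 → ℝ) (h0 : ∀ i, 0 ≤ p i) (h1 : ∑ i, p i = 1)
    (h : HasSymExt 2 (bellDiag p)) : ∀ i, p i ≤ 3 / 4 :=
  stmt19_general p h
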